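/- In a simply-laced triangle-free Coxeter system, if α is a link of rank r ≥ 0, then the map Φ_α : [α] → {0,1}^r defined by Φ_α(β) = a₁a₂⋯a_r, where a_k = 0 if β and α have the same letter in position 2k and a_k = 1 otherwise, is an isometric embedding of the braid graph B(α) into the hypercube Q_r. In particular, the braid graph of a link is a partial cube with isometric dimension at most its rank. -/
import Mathlib


open List

namespace BraidFormal

variable {B : Type*}

/-- A single braid move: replace a factor `s t s` with `t s t` where `m(s,t) = 3`. -/
def IsBraidMove (M : CoxeterMatrix B) (w w' : List B) : Prop :=
  ∃ (u v : List B) (s t : B), M s t = 3 ∧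
    w = u ++ [s, t, s] ++ v ∧ w' = u ++ [t, s, t] ++ v

/-- Braid equivalence: the reflexive-transitive closure of braid moves. -/
def BraidEquiv (M : CoxeterMatrix B) : List B → List B → Prop :=
  Relation.ReflTransGen (IsBraidMove M)

/-- The braid class of a word. -/
def BraidClass (M : CoxeterMatrix B) (α : List B) : Set (List B) :=
  {β | BraidEquiv M α β}

/-- `w` has a braid shadow at (0-based) positions `i, i+1, i+2`:
the letters there are `s, t, s` with `m(s,t) = 3`.
(This corresponds to the 1-based interval `⟦i+1, i+3⟧` of the paper.) -/
def HasShadowAt (M : CoxeterMatrix B) (w : List B) (i : ℕ) : Prop :=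
  ∃ s t : B, M s t = 3 ∧ w[i]? = some s ∧ w[i+1]? = some t ∧ w[i+2]? = some s

/-- The braid class of `α` has a braid shadow at position `i`. -/
def ClassHasShadowAt (M : CoxeterMatrix B) (α : List B) (i : ℕ) : Prop :=
  ∃ β ∈ BraidClass M α, HasShadowAt M β i

/-- The rank of a reduced expression: the number of braid shadows of its braid class. -/
noncomputable def rank (M : CoxeterMatrix B) (α : List B) : ℕ :=
  Set.ncard {i | ClassHasShadowAt M α i}

/-- A Coxeter matrix is simply laced if all entries are at most 3. -/
def SimplyLaced (M : CoxeterMatrix B) : Prop := ∀ s t : B, M s t ≤ 3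

/-- A Coxeter matrix is triangle free if its Coxeter graph has no three-cycles
(all of whose edges are labelled 3). -/
def TriangleFree (M : CoxeterMatrix B) : Prop :=
  ∀ s t u : B, s ≠ t → t ≠ u → s ≠ u → M s t = 3 → M t u = 3 → M s u ≠ 3

/-- The set of generators appearing in (0-based) position `k` of some word in the
braid class of `α`. -/
def classSupp (M : CoxeterMatrix B) (α : List B) (k : ℕ) : Set B :=
  {s | ∃ β ∈ BraidClass M α, β[k]? = some s}

/-- The set of generators appearing in (0-based) positions `i` through `j` of `w`. -/
def suppInterval (w : List B) (i j : ℕ) : Set B :=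
  {s | ∃ k, i ≤ k ∧ k ≤ j ∧ w[k]? = some s}

variable {W : Type*} [Group W] {M : CoxeterMatrix B}

/-- `α` is a link of rank `r`: a reduced expression of length `2r+1` whose braid class
has braid shadows exactly at the (0-based) positions `0, 2, 4, …, 2r-2`
(the 1-based intervals `⟦1,3⟧, ⟦3,5⟧, …, ⟦2r-1,2r+1⟧`). -/
def IsLink (cs : CoxeterSystem M W) (α : List B) (r : ℕ) : Prop :=
  cs.IsReduced α ∧ α.length = 2 * r + 1 ∧
    ∀ i : ℕ, ClassHasShadowAt M α i ↔ ∃ j < r, i = 2 * j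

/-- A Fibonacci link: a link all of whose braid-class braid shadows are braid shadows
of the link itself. -/
def IsFibLink (cs : CoxeterSystem M W) (φ : List B) (r : ℕ) : Prop :=
  IsLink cs φ r ∧ ∀ i : ℕ, ClassHasShadowAt M φ i → HasShadowAt M φ i

/-- The hypercube graph `Q_r`: vertices are binary strings of length `r`, adjacent
exactly when they differ in a single coordinate (Hamming distance one). -/
def hypercube (r : ℕ) : SimpleGraph (Fin r → Bool) :=
  SimpleGraph.fromRel (fun x y => hammingDist x y = 1)

/-- An isometric embedding of graphs: a map preserving the geodesic distance. -/
def IsIsometricEmbedding {V V' : Type*} (G : SimpleGraph V) (H : SimpleGraph V')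
    (f : V → V') : Prop :=
  ∀ u v : V, G.dist u v = H.dist (f u) (f v)

/-- A partial cube: a connected graph isometrically embeddable into some hypercube. -/
def IsPartialCube {V : Type*} (G : SimpleGraph V) : Prop :=
  G.Connected ∧ ∃ (r : ℕ) (f : V → Fin r → Bool), IsIsometricEmbedding G (hypercube r) f

/-- The isometric dimension of a graph: the least dimension of a hypercube into which
it embeds isometrically. -/
noncomputable def isoDim {V : Type*} (G : SimpleGraph V) : ℕ :=
  sInf {r : ℕ | ∃ f : V → Fin r → Bool, IsIsometricEmbedding G (hypercube r) f}

/-- The braid graph of `α`: vertices are the members of the braid class of `α`,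
with edges given by single braid moves. -/
def braidGraph (M : CoxeterMatrix B) (α : List B) : SimpleGraph (BraidClass M α) :=
  SimpleGraph.fromRel (fun β γ => IsBraidMove M β.1 γ.1)

section Aux

lemma ne_of_M3 {s t : B} (h : M s t = 3) : s ≠ t := by
  rintro rfl; rw [M.diagonal] at h; omega

/-- Pointwise description of a braid move at position `a`. -/
def MoveAt (M : CoxeterMatrix B) (a : ℕ) (x y : List B) : Prop :=
  y.length = x.length ∧ a + 2 < x.length ∧
  ∃ s t : B, M s t = 3 ∧
    x[a]? = some s ∧ x[a+1]? = some t ∧ x[a+2]? = some s ∧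
    y[a]? = some t ∧ y[a+1]? = some s ∧ y[a+2]? = some t ∧
    ∀ k : ℕ, k ≠ a → k ≠ a+1 → k ≠ a+2 → y[k]? = x[k]?

lemma append3_getElem?_lt {u m v : List B} {k : ℕ} (h : k < u.length) :
    (u ++ m ++ v)[k]? = u[k]? := by
  rw [List.append_assoc, List.getElem?_append_left h]

lemma append3_getElem?_mid {u m v : List B} {i : ℕ} (h : i < m.length) :
    (u ++ m ++ v)[u.length + i]? = m[i]? := by
  rw [List.append_assoc, List.getElem?_append_right (Nat.le_add_right _ _),
    Nat.add_sub_cancel_left, List.getElem?_append_left h]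

lemma append3_getElem?_ge {u m v : List B} {k : ℕ} (h : u.length + m.length ≤ k) :
    (u ++ m ++ v)[k]? = v[k - u.length - m.length]? := by
  rw [List.append_assoc, List.getElem?_append_right (by omega),
    List.getElem?_append_right (by omega)]

lemma isBraidMove_iff_moveAt {x y : List B} :
    IsBraidMove M x y ↔ ∃ a, MoveAt M a x y := by
  constructor
  · rintro ⟨u, v, s, t, hm, rfl, rfl⟩
    have l1 : ∀ (m : List B) (i : ℕ), i < m.length → (u ++ m ++ v)[u.length + i]? = m[i]? :=
      fun m i h => append3_getElem?_mid h
    refine ⟨u.length, ?_, ?_, s, t, hm, ?_, ?_, ?_, ?_, ?_, ?_, ?_⟩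
    · simp only [List.length_append, List.length_cons, List.length_nil]
    · simp only [List.length_append, List.length_cons, List.length_nil]; omega
    · simpa using l1 [s,t,s] 0 (by simp)
    · simpa using l1 [s,t,s] 1 (by simp)
    · simpa using l1 [s,t,s] 2 (by simp)
    · simpa using l1 [t,s,t] 0 (by simp)
    · simpa using l1 [t,s,t] 1 (by simp)
    · simpa using l1 [t,s,t] 2 (by simp)
    · intro k h0 h1 h2
      rcases Nat.lt_or_ge k u.length with hk | hk
      · rw [append3_getElem?_lt hk, append3_getElem?_lt hk]
      · have hk3 : u.length + 3 ≤ k := by omega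
        rw [append3_getElem?_ge (by simpa using hk3), append3_getElem?_ge (by simpa using hk3)]
        simp
  · rintro ⟨a, hlen, hlt, s, t, hm, hx0, hx1, hx2, hy0, hy1, hy2, hk⟩
    have hul : (x.take a).length = a := by rw [List.length_take]; omega
    have lmid : ∀ (m : List B) (i : ℕ), i < m.length →
        (x.take a ++ m ++ x.drop (a+3))[a + i]? = m[i]? := by
      intro m i h
      have := append3_getElem?_mid (u := x.take a) (m := m) (v := x.drop (a+3)) (i := i) h
      rwa [hul] at this
    have lge : ∀ (m : List B) (k : ℕ), m.length = 3 → a + 3 ≤ k →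
        (x.take a ++ m ++ x.drop (a+3))[k]? = x[k]? := by
      intro m k hm3 hak
      rw [append3_getElem?_ge (by rw [hul, hm3]; omega), List.getElem?_drop]
      congr 1
      rw [hul, hm3]
      omega
    have hxeq : x = x.take a ++ [s,t,s] ++ x.drop (a+3) := by
      apply List.ext_getElem?
      intro n
      rcases Nat.lt_or_ge n a with hn | hn
      · rw [append3_getElem?_lt (by omega), List.getElem?_take_of_lt hn]
      rcases Nat.lt_or_ge n (a+3) with hn3 | hn3
      · obtain hna | hna | hna : n = a ∨ n = a+1 ∨ n = a+2 := by omega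
        all_goals subst hna
        · have h0 := lmid [s,t,s] 0 (by simp)
          simp only [Nat.add_zero] at h0
          rw [h0, hx0]; rfl
        · rw [lmid [s,t,s] 1 (by simp), hx1]; rfl
        · rw [lmid [s,t,s] 2 (by simp), hx2]; rfl
      · rw [lge [s,t,s] n rfl hn3]
    have hyeq : y = x.take a ++ [t,s,t] ++ x.drop (a+3) := by
      apply List.ext_getElem?
      intro n
      rcases Nat.lt_or_ge n a with hn | hn
      · rw [append3_getElem?_lt (by omega), List.getElem?_take_of_lt hn,
          hk n (by omega) (by omega) (by omega)]
      rcases Nat.lt_or_ge n (a+3) with hn3 | hn3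
      · obtain hna | hna | hna : n = a ∨ n = a+1 ∨ n = a+2 := by omega
        all_goals subst hna
        · have h0 := lmid [t,s,t] 0 (by simp)
          simp only [Nat.add_zero] at h0
          rw [h0, hy0]; rfl
        · rw [lmid [t,s,t] 1 (by simp), hy1]; rfl
        · rw [lmid [t,s,t] 2 (by simp), hy2]; rfl
      · rw [lge [t,s,t] n rfl hn3, hk n (by omega) (by omega) (by omega)]
    exact ⟨x.take a, x.drop (a+3), s, t, hm, hxeq, hyeq⟩

lemma IsBraidMove.symm' {x y : List B} (h : IsBraidMove M x y) : IsBraidMove M y x := by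
  obtain ⟨u, v, s, t, hm, h1, h2⟩ := h
  exact ⟨u, v, t, s, (M.symmetric t s).trans hm, h2, h1⟩

lemma MoveAt.ne {a : ℕ} {x y : List B} (h : MoveAt M a x y) : x ≠ y := by
  obtain ⟨hlen, hlt, s, t, hm, hx0, hx1, hx2, hy0, hy1, hy2, hk⟩ := h
  intro he
  rw [he, hy1] at hx1
  exact ne_of_M3 hm (by injection hx1)

lemma IsBraidMove.length_eq {x y : List B} (h : IsBraidMove M x y) : y.length = x.length :=
  (isBraidMove_iff_moveAt.mp h).choose_spec.1

/-- Chains of braid moves of a given length. -/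
inductive Chain (M : CoxeterMatrix B) : List B → List B → ℕ → Prop
  | refl (w) : Chain M w w 0
  | cons {w x y : List B} {n : ℕ} (h : IsBraidMove M w x) (hc : Chain M x y n) :
      Chain M w y (n+1)

lemma Chain.append {x y z : List B} {m n : ℕ} (h1 : Chain M x y m) (h2 : Chain M y z n) :
    Chain M x z (m + n) := by
  induction h1 with
  | refl => simpa using h2
  | cons h hc ih =>
    rw [Nat.add_right_comm]
    exact Chain.cons h (ih h2)

lemma Chain.single {x y : List B} (h : IsBraidMove M x y) : Chain M x y 1 :=
  Chain.cons h (Chain.refl y)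

lemma Chain.symm {x y : List B} {n : ℕ} (h : Chain M x y n) : Chain M y x n := by
  induction h with
  | refl => exact Chain.refl _
  | cons h hc ih =>
    exact ih.append (Chain.single h.symm')

lemma braidEquiv_chain {x y : List B} (h : BraidEquiv M x y) : ∃ n, Chain M x y n := by
  induction h with
  | refl => exact ⟨0, Chain.refl _⟩
  | tail _ h ih =>
    obtain ⟨n, hc⟩ := ih
    exact ⟨n + 1, hc.append (Chain.single h)⟩

lemma exists_chain {α x y : List B} (hx : x ∈ BraidClass M α) (hy : y ∈ BraidClass M α) :
    ∃ n, Chain M x y n := by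
  obtain ⟨m, h1⟩ := braidEquiv_chain (hx : BraidEquiv M α x)
  obtain ⟨n, h2⟩ := braidEquiv_chain (hy : BraidEquiv M α y)
  exact ⟨m + n, h1.symm.append h2⟩

lemma mem_class_move {α x y : List B} (hx : x ∈ BraidClass M α) (h : IsBraidMove M x y) :
    y ∈ BraidClass M α :=
  Relation.ReflTransGen.tail hx h

lemma mem_class_length {α x : List B} (hx : x ∈ BraidClass M α) : x.length = α.length := by
  induction (hx : BraidEquiv M α x) with
  | refl => rfl
  | tail _ h ih => rw [h.length_eq, ih]

open scoped Classical in
/-- Number of odd positions `2j+1` (for `j < r`) where two words differ. -/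
noncomputable def Dd (r : ℕ) (x y : List B) : ℕ :=
  ((Finset.range r).filter (fun j => x[2*j+1]? ≠ y[2*j+1]?)).card

open scoped Classical

lemma Dd_self (r : ℕ) (x : List B) : Dd r x x = 0 := by
  simp [Dd]

lemma move_coord {α : List B} {r : ℕ}
    (hsh : ∀ i, ClassHasShadowAt M α i → ∃ j < r, i = 2*j)
    {x y : List B} (hx : x ∈ BraidClass M α) (h : IsBraidMove M x y) :
    ∃ j < r, MoveAt M (2*j) x y := by
  obtain ⟨a, ha⟩ := isBraidMove_iff_moveAt.mp h
  have ha' := ha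
  obtain ⟨-, -, s, t, hm, hx0, hx1, hx2, -, -, -, -⟩ := ha'
  obtain ⟨j, hj, rfl⟩ := hsh a ⟨x, hx, s, t, hm, hx0, hx1, hx2⟩
  exact ⟨j, hj, ha⟩

lemma MoveAt.odd_eq {j i : ℕ} {x y : List B} (h : MoveAt M (2*j) x y) (hij : i ≠ j) :
    y[2*i+1]? = x[2*i+1]? := by
  obtain ⟨-, -, s, t, hm, -, -, -, -, -, -, hk⟩ := h
  exact hk _ (by omega) (by omega) (by omega)

lemma MoveAt.odd_move {j : ℕ} {x y : List B} (h : MoveAt M (2*j) x y) :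
    ∃ s t : B, M s t = 3 ∧ x[2*j+1]? = some t ∧ y[2*j+1]? = some s ∧
      x[2*j]? = some s ∧ x[2*j+2]? = some s ∧ y[2*j]? = some t ∧ y[2*j+2]? = some t := by
  obtain ⟨-, -, s, t, hm, hx0, hx1, hx2, hy0, hy1, hy2, -⟩ := h
  exact ⟨s, t, hm, hx1, hy1, hx0, hx2, hy0, hy2⟩

lemma MoveAt.odd_ne {j : ℕ} {x y : List B} (h : MoveAt M (2*j) x y) :
    x[2*j+1]? ≠ y[2*j+1]? := by
  obtain ⟨s, t, hm, hx1, hy1, -⟩ := h.odd_move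
  rw [hx1, hy1]
  intro hc
  injection hc with hc
  exact ne_of_M3 hm hc.symm

lemma Dd_move_le {r : ℕ} {x y γ : List B} {j : ℕ} (h : MoveAt M (2*j) x y) :
    Dd r x γ ≤ Dd r y γ + 1 := by
  unfold Dd
  have hsub : (Finset.range r).filter (fun i => x[2*i+1]? ≠ γ[2*i+1]?) ⊆
      insert j ((Finset.range r).filter (fun i => y[2*i+1]? ≠ γ[2*i+1]?)) := by
    intro i hi
    simp only [Finset.mem_filter, Finset.mem_range] at hi
    by_cases hij : i = j
    · simp [hij]
    · refine Finset.mem_insert_of_mem ?_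
      simp only [Finset.mem_filter, Finset.mem_range]
      exact ⟨hi.1, by rw [h.odd_eq hij]; exact hi.2⟩
  exact le_trans (Finset.card_le_card hsub) (Finset.card_insert_le _ _)

lemma Dd_move_eq {r : ℕ} {x y γ : List B} {j : ℕ} (hj : j < r) (h : MoveAt M (2*j) x y)
    (hyγ : y[2*j+1]? = γ[2*j+1]?) : Dd r x γ = Dd r y γ + 1 := by
  have hxy : x[2*j+1]? ≠ y[2*j+1]? := h.odd_ne
  unfold Dd
  have hset : (Finset.range r).filter (fun i => x[2*i+1]? ≠ γ[2*i+1]?) =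
      insert j ((Finset.range r).filter (fun i => y[2*i+1]? ≠ γ[2*i+1]?)) := by
    ext i
    simp only [Finset.mem_insert, Finset.mem_filter, Finset.mem_range]
    by_cases hij : i = j
    · subst hij
      constructor
      · intro _; exact Or.inl rfl
      · intro _
        refine ⟨hj, ?_⟩
        rw [← hyγ]
        exact hxy
    · constructor
      · intro hi
        exact Or.inr ⟨hi.1, by rw [h.odd_eq hij]; exact hi.2⟩
      · rintro (hc | hi)
        · exact absurd hc hij
        · exact ⟨hi.1, by rw [← h.odd_eq hij]; exact hi.2⟩
  rw [hset, Finset.card_insert_of_notMem]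
  simp only [Finset.mem_filter, Finset.mem_range, not_and, not_not]
  intro _
  exact hyγ

lemma Dd_le_chain {α : List B} {r : ℕ}
    (hsh : ∀ i, ClassHasShadowAt M α i → ∃ j < r, i = 2*j) {γ : List B} :
    ∀ (n : ℕ) (x : List B), x ∈ BraidClass M α → Chain M x γ n → Dd r x γ ≤ n := by
  intro n
  induction n with
  | zero =>
    intro x hx hc
    cases hc
    simp [Dd_self]
  | succ n ih =>
    intro x hx hc
    cases hc with
    | cons h hc =>
      obtain ⟨j, hj, hmv⟩ := move_coord hsh hx h
      have h1 := ih _ (mem_class_move hx h) hc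
      have h2 := Dd_move_le (r := r) (γ := γ) hmv
      omega

lemma chain_step {α : List B} {r : ℕ}
    (hsh : ∀ i, ClassHasShadowAt M α i → ∃ j < r, i = 2*j)
    {γ x y : List B} {n : ℕ} (hx : x ∈ BraidClass M α)
    (h : IsBraidMove M x y) (hc : Chain M y γ n) (hD : Dd r x γ = n + 1) :
    ∃ j < r, MoveAt M (2*j) x y ∧ x[2*j+1]? ≠ γ[2*j+1]? ∧ y[2*j+1]? = γ[2*j+1]? ∧
      Dd r y γ = n := by
  obtain ⟨j, hj, hmv⟩ := move_coord hsh hx h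
  have hy : y ∈ BraidClass M α := mem_class_move hx h
  have h1 : Dd r y γ ≤ n := Dd_le_chain hsh n y hy hc
  by_cases hyγ : y[2*j+1]? = γ[2*j+1]?
  · have h3 := Dd_move_eq hj hmv hyγ
    refine ⟨j, hj, hmv, ?_, hyγ, by omega⟩
    rw [← hyγ]
    exact hmv.odd_ne
  · exfalso
    have hsub : (Finset.range r).filter (fun i => x[2*i+1]? ≠ γ[2*i+1]?) ⊆
        (Finset.range r).filter (fun i => y[2*i+1]? ≠ γ[2*i+1]?) := by
      intro i hi
      simp only [Finset.mem_filter, Finset.mem_range] at hi ⊢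
      by_cases hij : i = j
      · subst hij; exact ⟨hi.1, hyγ⟩
      · exact ⟨hi.1, by rw [hmv.odd_eq hij]; exact hi.2⟩
    have := Finset.card_le_card hsub
    unfold Dd at hD h1
    omega

lemma getElem?_set3 {l : List B} {b : ℕ} {p q w : B} (hb : b + 2 < l.length) (k : ℕ) :
    (((l.set b p).set (b+1) q).set (b+2) w)[k]? =
      if k = b then some p else if k = b+1 then some q else if k = b+2 then some w
        else l[k]? := by
  by_cases h2 : k = b + 2
  · rw [h2, List.getElem?_set_self (by simpa using hb), if_neg (by omega), if_neg (by omega),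
      if_pos rfl]
  by_cases h1 : k = b + 1
  · rw [h1, List.getElem?_set_ne (by omega),
      List.getElem?_set_self (by simpa using (show b + 1 < l.length by omega)),
      if_neg (by omega), if_pos rfl]
  by_cases h0 : k = b
  · rw [h0, List.getElem?_set_ne (by omega), List.getElem?_set_ne (by omega),
      List.getElem?_set_self (by simpa using (show b < l.length by omega)), if_pos rfl]
  · rw [List.getElem?_set_ne (by omega), List.getElem?_set_ne (by omega),
      List.getElem?_set_ne (by omega), if_neg h0, if_neg h1, if_neg h2]

lemma moveAt_swap {a b : ℕ} {x y z : List B} (hab : a + 2 < b ∨ b + 2 < a)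
    (h1 : MoveAt M a x y) (h2 : MoveAt M b y z) :
    ∃ y', MoveAt M b x y' ∧ MoveAt M a y' z := by
  obtain ⟨hl1, hlt1, s1, t1, hm1, hx0, hx1, hx2, hy0, hy1, hy2, hk1⟩ := h1
  obtain ⟨hl2, hlt2, s2, t2, hm2, hyb0, hyb1, hyb2, hz0, hz1, hz2, hk2⟩ := h2
  have hblen : b + 2 < x.length := by omega
  set y' := ((x.set b t2).set (b+1) s2).set (b+2) t2 with hy'
  have hg : ∀ k, y'[k]? = if k = b then some t2 else if k = b+1 then some s2
      else if k = b+2 then some t2 else x[k]? := getElem?_set3 hblen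
  have hy'len : y'.length = x.length := by simp [hy']
  have hxb0 : x[b]? = some s2 := by rw [← hk1 b (by omega) (by omega) (by omega)]; exact hyb0
  have hxb1 : x[b+1]? = some t2 := by
    rw [← hk1 (b+1) (by omega) (by omega) (by omega)]; exact hyb1
  have hxb2 : x[b+2]? = some s2 := by
    rw [← hk1 (b+2) (by omega) (by omega) (by omega)]; exact hyb2
  refine ⟨y', ⟨hy'len, hblen, s2, t2, hm2, hxb0, hxb1, hxb2, ?_, ?_, ?_, ?_⟩,
    ⟨by omega, by omega, s1, t1, hm1, ?_, ?_, ?_, ?_, ?_, ?_, ?_⟩⟩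
  · rw [hg]; simp
  · rw [hg]; rw [if_neg (by omega), if_pos rfl]
  · rw [hg]; rw [if_neg (by omega), if_neg (by omega), if_pos rfl]
  · intro k hk0 hk1' hk2'
    rw [hg, if_neg hk0, if_neg hk1', if_neg hk2']
  · rw [hg, if_neg (by omega), if_neg (by omega), if_neg (by omega)]; exact hx0
  · rw [hg, if_neg (by omega), if_neg (by omega), if_neg (by omega)]; exact hx1
  · rw [hg, if_neg (by omega), if_neg (by omega), if_neg (by omega)]; exact hx2
  · rw [hk2 a (by omega) (by omega) (by omega)]; exact hy0
  · rw [hk2 (a+1) (by omega) (by omega) (by omega)]; exact hy1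
  · rw [hk2 (a+2) (by omega) (by omega) (by omega)]; exact hy2
  · intro k hk0 hk1' hk2'
    rw [hg]
    by_cases hkb0 : k = b
    · subst hkb0; rw [if_pos rfl]; exact hz0
    by_cases hkb1 : k = b + 1
    · subst hkb1; rw [if_neg (by omega), if_pos rfl]; exact hz1
    by_cases hkb2 : k = b + 2
    · subst hkb2; rw [if_neg (by omega), if_neg (by omega), if_pos rfl]; exact hz2
    · rw [if_neg hkb0, if_neg hkb1, if_neg hkb2,
        hk2 k hkb0 hkb1 hkb2, hk1 k hk0 hk1' hk2']

lemma MoveAt.untouched {a : ℕ} {x y : List B} (h : MoveAt M a x y) {p : ℕ}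
    (hp : p < a ∨ a + 2 < p) : y[p]? = x[p]? := by
  obtain ⟨-, -, s, t, hm, -, -, -, -, -, -, hk⟩ := h
  exact hk p (by omega) (by omega) (by omega)

lemma Dd_pos {r j : ℕ} (hj : j < r) {x γ : List B} (h : x[2*j+1]? ≠ γ[2*j+1]?) :
    1 ≤ Dd r x γ := by
  refine Finset.card_pos.mpr ⟨j, ?_⟩
  simp only [Finset.mem_filter, Finset.mem_range]
  exact ⟨hj, h⟩

/-- The key cancellation lemma.  If a geodesic chain starts at a word whose letter at odd
position `2j+1` is `s`, surrounded (in the relevant window) by letters constrained relative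
to `t` with `m(s,t)=3`, then the first braid move at coordinate `j` along the chain must be
the move with sides `t`, it can be commuted to the front, and the target's letter at
position `2j+1` is `t`. -/
lemma key {α : List B} {r : ℕ} (htf : TriangleFree M)
    (hsh : ∀ i, ClassHasShadowAt M α i → ∃ j < r, i = 2*j)
    {γ : List B} {j : ℕ} (hj : j < r) {s t : B} (hst : M s t = 3) :
    ∀ (n : ℕ) (x : List B), x ∈ BraidClass M α → Chain M x γ n → Dd r x γ = n →
      x[2*j+1]? = some s → x[2*j+1]? ≠ γ[2*j+1]? →
      ∀ c d : B, x[2*j]? = some c → x[2*j+2]? = some d →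
      (c = t ∨ ∃ j', j = j' + 1 ∧ M t c = 3 ∧ c ≠ t ∧ x[2*j'+1]? = γ[2*j'+1]?) →
      (d = t ∨ (M t d = 3 ∧ d ≠ t ∧ x[2*(j+1)+1]? = γ[2*(j+1)+1]?)) →
      c = t ∧ d = t ∧ γ[2*j+1]? = some t ∧
        ∃ v, MoveAt M (2*j) x v ∧ Chain M v γ (n-1) ∧ Dd r v γ = n-1 := by
  intro n
  induction n with
  | zero =>
    intro x hx hc hD hxs hxγ c d hxc hxd hcs hds
    cases hc
    exact absurd rfl hxγ
  | succ n ih =>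
    intro x hx hc hD hxs hxγ c d hxc hxd hcs hds
    cases hc with
    | cons hmv hc =>
      rename_i y
      obtain ⟨k, hk, hmvk, hxk, hyk, hDy⟩ := chain_step hsh hx hmv hc hD
      have hy : y ∈ BraidClass M α := mem_class_move hx hmv
      by_cases hkj : k = j
      · -- the first move of the chain is at coordinate j
        subst hkj
        obtain ⟨σ, τ, hm, hx1, hy1, hx0, hx2, hy0, hy2⟩ := hmvk.odd_move
        have hτ : τ = s := by rw [hxs] at hx1; exact (Option.some.inj hx1).symm
        have hσc : σ = c := by rw [hxc] at hx0; exact (Option.some.inj hx0).symm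
        have hσd : σ = d := by rw [hxd] at hx2; exact (Option.some.inj hx2).symm
        by_cases hct : c = t
        · refine ⟨hct, by rw [← hσd, hσc, hct], ?_, y, hmvk, by simpa using hc, by simpa using hDy⟩
          rw [← hyk, hy1, hσc, hct]
        · -- c ≠ t : triangle contradiction
          exfalso
          have hMtc : M t c = 3 := by
            rcases hcs with h | ⟨j', hj', hMtc, -, -⟩
            · exact absurd h hct
            · exact hMtc
          have hMcs : M c s = 3 := by rw [← hσc, ← hτ]; exact hm
          have hns : s ≠ t := ne_of_M3 hst
          have hnt : t ≠ c := ne_of_M3 hMtc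
          have hnc : s ≠ c := fun h => (ne_of_M3 hMcs) h.symm
          exact htf s t c hns hnt hnc hst hMtc ((M.symmetric s c).trans hMcs)
      by_cases hkj1 : k + 1 = j
      · -- move at coordinate j-1 : leads to a dead state
        exfalso
        subst hkj1
        obtain ⟨σ, τ, hm, hx1, hy1, hx0, hx2, hy0, hy2⟩ := hmvk.odd_move
        -- positions: 2k+2 = 2(k+1) = 2j
        have e1 : 2*(k+1) = 2*k+2 := by omega
        rw [e1] at hxc
        have hσc : σ = c := by rw [hxc] at hx2; exact (Option.some.inj hx2).symm
        have hct : c = t := by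
          rcases hcs with h | ⟨j', hj', -, -, hxj'⟩
          · exact h
          · have : j' = k := by omega
            subst this
            exact absurd hxj' hxk
        -- apply ih to y; its 2j-position letter is τ with M t τ = 3, τ ≠ t
        have hyτ : y[2*(k+1)]? = some τ := by rw [e1]; exact hy2
        have hMtτ : M t τ = 3 := by rw [← hct, ← hσc]; exact hm
        have hτt : τ ≠ t := fun h => (ne_of_M3 hMtτ) h.symm
        have hys : y[2*(k+1)+1]? = some s := by
          rw [hmvk.untouched (by omega)]; exact hxs
        have hyγ' : y[2*(k+1)+1]? ≠ γ[2*(k+1)+1]? := by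
          rw [hmvk.untouched (by omega)]; exact hxγ
        have hyd : y[2*(k+1)+2]? = some d := by
          rw [hmvk.untouched (by omega)]; exact hxd
        have hds' : d = t ∨ (M t d = 3 ∧ d ≠ t ∧ y[2*(k+1+1)+1]? = γ[2*(k+1+1)+1]?) := by
          rcases hds with h | ⟨h1, h2, h3⟩
          · exact Or.inl h
          · exact Or.inr ⟨h1, h2, by rw [hmvk.untouched (by omega)]; exact h3⟩
        have := (ih y hy hc hDy hys hyγ' τ d hyτ hyd
          (Or.inr ⟨k, rfl, hMtτ, hτt, hyk⟩) hds').1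
        exact hτt this
      by_cases hkj2 : k = j + 1
      · -- move at coordinate j+1 : leads to a dead state
        exfalso
        subst hkj2
        obtain ⟨σ, τ, hm, hx1, hy1, hx0, hx2, hy0, hy2⟩ := hmvk.odd_move
        -- positions: 2(j+1) = 2j+2
        have e1 : 2*(j+1) = 2*j+2 := by omega
        rw [e1] at hx0 hy0
        have hσd : σ = d := by rw [hxd] at hx0; exact (Option.some.inj hx0).symm
        have hdt : d = t := by
          rcases hds with h | ⟨-, -, hxj'⟩
          · exact h
          · exact absurd hxj' hxk
        have hMtτ : M t τ = 3 := by rw [← hdt, ← hσd]; exact hm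
        have hτt : τ ≠ t := fun h => (ne_of_M3 hMtτ) h.symm
        have hys : y[2*j+1]? = some s := by
          rw [hmvk.untouched (by omega)]; exact hxs
        have hyγ' : y[2*j+1]? ≠ γ[2*j+1]? := by
          rw [hmvk.untouched (by omega)]; exact hxγ
        have hyc : y[2*j]? = some c := by
          rw [hmvk.untouched (by omega)]; exact hxc
        have hyτ : y[2*j+2]? = some τ := hy0
        have hcs' : c = t ∨ ∃ j', j = j' + 1 ∧ M t c = 3 ∧ c ≠ t ∧
            y[2*j'+1]? = γ[2*j'+1]? := by
          rcases hcs with h | ⟨j', hj', h1, h2, h3⟩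
          · exact Or.inl h
          · exact Or.inr ⟨j', hj', h1, h2, by rw [hmvk.untouched (by omega)]; exact h3⟩
        have := (ih y hy hc hDy hys hyγ' c τ hyc hyτ hcs'
          (Or.inr ⟨hMtτ, hτt, hyk⟩)).2.1
        exact hτt this
      · -- distant move : commute it past the coordinate-j move
        have hfar : k + 2 ≤ j ∨ j + 2 ≤ k := by omega
        have hdisj : ∀ p : ℕ, 2*j - 1 ≤ p → p ≤ 2*j + 3 → (p < 2*k ∨ 2*k+2 < p) := by
          intro p h1 h2; omega
        have hys : y[2*j+1]? = some s := by
          rw [hmvk.untouched (hdisj _ (by omega) (by omega))]; exact hxs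
        have hyγ' : y[2*j+1]? ≠ γ[2*j+1]? := by
          rw [hmvk.untouched (hdisj _ (by omega) (by omega))]; exact hxγ
        have hyc : y[2*j]? = some c := by
          rw [hmvk.untouched (hdisj _ (by omega) (by omega))]; exact hxc
        have hyd : y[2*j+2]? = some d := by
          rw [hmvk.untouched (hdisj _ (by omega) (by omega))]; exact hxd
        have hcs' : c = t ∨ ∃ j', j = j' + 1 ∧ M t c = 3 ∧ c ≠ t ∧
            y[2*j'+1]? = γ[2*j'+1]? := by
          rcases hcs with h | ⟨j', hj', h1, h2, h3⟩
          · exact Or.inl h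
          · exact Or.inr ⟨j', hj', h1, h2, by
              rw [hmvk.untouched (by omega)]; exact h3⟩
        have hds' : d = t ∨ (M t d = 3 ∧ d ≠ t ∧ y[2*(j+1)+1]? = γ[2*(j+1)+1]?) := by
          rcases hds with h | ⟨h1, h2, h3⟩
          · exact Or.inl h
          · exact Or.inr ⟨h1, h2, by
              rw [hmvk.untouched (by omega)]; exact h3⟩
        obtain ⟨hct, hdt, hγt, v', hmv', hcv', hDv'⟩ :=
          ih y hy hc hDy hys hyγ' c d hyc hyd hcs' hds'
        have hn1 : 1 ≤ n := le_trans (Dd_pos hj hyγ') (le_of_eq hDy)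
        obtain ⟨v, hmvxv, hmvvv'⟩ := moveAt_swap (by omega) hmvk hmv'
        refine ⟨hct, hdt, hγt, v, hmvxv, ?_, ?_⟩
        · have : Chain M v γ ((n-1)+1) :=
            Chain.cons (isBraidMove_iff_moveAt.mpr ⟨2*k, hmvvv'⟩) hcv'
          simpa [show n - 1 + 1 = n from by omega] using this
        · -- Dd r v γ = n
          obtain ⟨σ, τ, hm, hx1, hv1, hx0, hx2, hv0, hv2⟩ := hmvxv.odd_move
          have hσc : σ = c := by rw [hxc] at hx0; exact (Option.some.inj hx0).symm
          have hvγ : v[2*j+1]? = γ[2*j+1]? := by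
            rw [hv1, hσc, hct, hγt]
          have := Dd_move_eq hj hmvxv hvγ
          simp only [Nat.add_sub_cancel]
          omega

/-- Main lemma: any two members of the braid class of a link are connected by a chain
whose length is the number of odd positions where they differ. -/
lemma main_chain {α : List B} {r : ℕ} (htf : TriangleFree M)
    (hsh : ∀ i, ClassHasShadowAt M α i → ∃ j < r, i = 2*j) :
    ∀ (n : ℕ) (x y : List B), x ∈ BraidClass M α → y ∈ BraidClass M α →
      Chain M x y n → Chain M x y (Dd r x y) := by
  intro n
  induction n with
  | zero =>
    intro x y hx hy hc
    cases hc
    rw [Dd_self]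
    exact Chain.refl x
  | succ n ih =>
    intro x y hx hy hc
    cases hc with
    | cons hmv hc =>
      rename_i w
      have hw : w ∈ BraidClass M α := mem_class_move hx hmv
      obtain ⟨j, hj, hmvj⟩ := move_coord hsh hx hmv
      have hchain' : Chain M w y (Dd r w y) := ih w y hw hy hc
      obtain ⟨a, b, hmab, hx1, hw1, hx0, hx2, hw0, hw2⟩ := hmvj.odd_move
      by_cases hwy : w[2*j+1]? = y[2*j+1]?
      · rw [Dd_move_eq hj hmvj hwy]
        exact Chain.cons hmv hchain'
      · have hkey := key htf hsh hj hmab (Dd r w y) w hw hchain' rfl hw1 hwy b b hw0 hw2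
          (Or.inl rfl) (Or.inl rfl)
        obtain ⟨-, -, hyj, v, hmvv, hcv, hDv⟩ := hkey
        -- v = x
        obtain ⟨hlv, hltv, σ, τ, hmστ, hw0', hw1', hw2', hv0, hv1, hv2, hkv⟩ := hmvv
        have hσ : σ = b := by rw [hw0] at hw0'; exact (Option.some.inj hw0').symm
        have hτ : τ = a := by rw [hw1] at hw1'; exact (Option.some.inj hw1').symm
        have hvx : v = x := by
          apply List.ext_getElem?
          intro p
          by_cases h0 : p = 2*j
          · rw [h0, hv0, hτ, hx0]
          by_cases h1 : p = 2*j+1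
          · rw [h1, hv1, hσ, hx1]
          by_cases h2 : p = 2*j+2
          · rw [h2, hv2, hτ, hx2]
          · rw [hkv p h0 h1 h2, hmvj.untouched (by omega)]
        rw [hvx] at hcv hDv
        have heq : Dd r x y = Dd r w y - 1 := by omega
        rw [heq]
        exact hcv

/-- In a geodesic chain, if the endpoints differ at an odd position, then the two letters
there are joined by an edge (`m = 3`) in the Coxeter graph. -/
lemma opp_letters {α : List B} {r : ℕ}
    (hsh : ∀ i, ClassHasShadowAt M α i → ∃ j < r, i = 2*j) {γ : List B} :
    ∀ (n : ℕ) (x : List B), x ∈ BraidClass M α → Chain M x γ n → Dd r x γ = n →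
      ∀ (j : ℕ) (b : B), x[2*j+1]? = some b → x[2*j+1]? ≠ γ[2*j+1]? →
      ∃ cγ : B, γ[2*j+1]? = some cγ ∧ M cγ b = 3 := by
  intro n
  induction n with
  | zero =>
    intro x hx hc hD j b hb hne
    cases hc
    exact absurd rfl hne
  | succ n ih =>
    intro x hx hc hD j b hb hne
    cases hc with
    | cons hmv hc =>
      rename_i y
      obtain ⟨k, hk, hmvk, hxk, hyk, hDy⟩ := chain_step hsh hx hmv hc hD
      by_cases hkj : k = j
      · subst hkj
        obtain ⟨σ, τ, hm, hx1, hy1, -, -, -, -⟩ := hmvk.odd_move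
        have hτ : τ = b := by rw [hb] at hx1; exact (Option.some.inj hx1).symm
        exact ⟨σ, by rw [← hyk, hy1], by rw [← hτ]; exact hm⟩
      · have hne' : j ≠ k := fun h => hkj h.symm
        have hyb : y[2*j+1]? = some b := by rw [hmvk.odd_eq hne']; exact hb
        have hyne : y[2*j+1]? ≠ γ[2*j+1]? := by rw [hmvk.odd_eq hne']; exact hne
        exact ih y (mem_class_move hx hmv) hc hDy j b hyb hyne

lemma braid_adj {α : List B} {u v : BraidClass M α} (h : IsBraidMove M u.1 v.1) :
    (braidGraph M α).Adj u v := by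
  refine (SimpleGraph.fromRel_adj _ _ _).mpr ⟨?_, Or.inl h⟩
  intro he
  obtain ⟨a, ha⟩ := isBraidMove_iff_moveAt.mp h
  exact ha.ne (congrArg Subtype.val he)

lemma chain_walk {α : List B} : ∀ {x y : List B} {n : ℕ}, Chain M x y n →
    ∀ (hx : x ∈ BraidClass M α) (hy : y ∈ BraidClass M α),
    ∃ w : (braidGraph M α).Walk ⟨x, hx⟩ ⟨y, hy⟩, w.length = n := by
  intro x y n hc
  induction hc with
  | refl w => intro hx hy; exact ⟨SimpleGraph.Walk.nil, rfl⟩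
  | cons h hc ih =>
    intro hx hy
    obtain ⟨w, hw⟩ := ih (mem_class_move hx h) hy
    exact ⟨SimpleGraph.Walk.cons (braid_adj h) w, by simp [hw]⟩

lemma walk_chain {α : List B} : ∀ {u v : BraidClass M α} (w : (braidGraph M α).Walk u v),
    Chain M u.1 v.1 w.length := by
  intro u v w
  induction w with
  | nil => exact Chain.refl _
  | cons h w ih =>
    rw [SimpleGraph.Walk.length_cons]
    obtain ⟨-, hmv | hmv⟩ := (SimpleGraph.fromRel_adj _ _ _).mp h
    · exact Chain.cons hmv ih
    · exact Chain.cons hmv.symm' ih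

lemma braid_dist {α : List B} {r : ℕ} (htf : TriangleFree M)
    (hsh : ∀ i, ClassHasShadowAt M α i → ∃ j < r, i = 2*j)
    {x y : List B} (hx : x ∈ BraidClass M α) (hy : y ∈ BraidClass M α) :
    (braidGraph M α).dist ⟨x, hx⟩ ⟨y, hy⟩ = Dd r x y := by
  obtain ⟨n, hcn⟩ := exists_chain hx hy
  have hgeo := main_chain htf hsh n x y hx hy hcn
  obtain ⟨w, hw⟩ := chain_walk hgeo hx hy
  have hle : (braidGraph M α).dist ⟨x,hx⟩ ⟨y,hy⟩ ≤ Dd r x y := hw ▸ SimpleGraph.dist_le w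
  have hreach : (braidGraph M α).Reachable ⟨x,hx⟩ ⟨y,hy⟩ := ⟨w⟩
  obtain ⟨w', hw'⟩ := hreach.exists_walk_length_eq_dist
  have hchain' := walk_chain w'
  have hge : Dd r x y ≤ w'.length := Dd_le_chain hsh _ x hx hchain'
  omega

lemma hyper_adj {r : ℕ} {x y : Fin r → Bool} :
    (hypercube r).Adj x y ↔ hammingDist x y = 1 := by
  rw [hypercube, SimpleGraph.fromRel_adj]
  constructor
  · rintro ⟨hne, h | h⟩
    · exact h
    · rw [hammingDist_comm]; exact h
  · intro h
    refine ⟨fun he => ?_, Or.inl h⟩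
    rw [he, hammingDist_self] at h
    omega

lemma hyper_walk {r : ℕ} (x y : Fin r → Bool) :
    ∃ w : (hypercube r).Walk x y, w.length = hammingDist x y := by
  generalize hn : hammingDist x y = n
  induction n generalizing x with
  | zero =>
    obtain rfl : x = y := eq_of_hammingDist_eq_zero hn
    exact ⟨SimpleGraph.Walk.nil, rfl⟩
  | succ n ih =>
    have hne : x ≠ y := by
      intro he
      rw [he, hammingDist_self] at hn
      omega
    obtain ⟨i, hi⟩ := Function.ne_iff.mp hne
    set x' := Function.update x i (y i) with hx'
    have hfil : ∀ z w : Fin r → Bool,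
        hammingDist z w = (Finset.univ.filter fun k => z k ≠ w k).card := fun _ _ => rfl
    have hone : (Finset.univ.filter fun k => x k ≠ x' k) = {i} := by
      ext k
      simp only [Finset.mem_filter, Finset.mem_univ, true_and, Finset.mem_singleton]
      constructor
      · intro hk
        by_contra hki
        exact hk (Function.update_of_ne hki _ _).symm
      · intro hk
        subst hk
        rw [hx', Function.update_self]
        exact hi
    have hdx : hammingDist x x' = 1 := by rw [hfil, hone, Finset.card_singleton]
    have hmem : i ∈ Finset.univ.filter fun k => x k ≠ y k := by
      simp only [Finset.mem_filter, Finset.mem_univ, true_and]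
      exact hi
    have herase : (Finset.univ.filter fun k => x' k ≠ y k) =
        (Finset.univ.filter fun k => x k ≠ y k).erase i := by
      ext k
      simp only [Finset.mem_filter, Finset.mem_univ, true_and, Finset.mem_erase]
      constructor
      · intro hk
        by_cases hki : k = i
        · subst hki
          rw [hx', Function.update_self] at hk
          exact absurd rfl hk
        · exact ⟨hki, by rwa [hx', Function.update_of_ne hki] at hk⟩
      · rintro ⟨hki, hk⟩
        rwa [hx', Function.update_of_ne hki]
    have hdy : hammingDist x' y = n := by
      rw [hfil, herase, Finset.card_erase_of_mem hmem, ← hfil, hn]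
      omega
    obtain ⟨w, hw⟩ := ih x' hdy
    have hadj : (hypercube r).Adj x x' := hyper_adj.mpr hdx
    exact ⟨SimpleGraph.Walk.cons hadj w, by simp [hw]⟩

lemma hyper_walk_le {r : ℕ} : ∀ {x y : Fin r → Bool} (w : (hypercube r).Walk x y),
    hammingDist x y ≤ w.length := by
  intro x y w
  induction w with
  | nil => simp [hammingDist_self]
  | @cons u v z h w ih =>
    rw [SimpleGraph.Walk.length_cons]
    have h1 := hammingDist_triangle u v z
    have h2 : hammingDist u v = 1 := hyper_adj.mp h
    omega

lemma hyper_dist {r : ℕ} (x y : Fin r → Bool) :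
    (hypercube r).dist x y = hammingDist x y := by
  obtain ⟨w, hw⟩ := hyper_walk x y
  have hle : (hypercube r).dist x y ≤ hammingDist x y := hw ▸ SimpleGraph.dist_le w
  have hreach : (hypercube r).Reachable x y := ⟨w⟩
  obtain ⟨w', hw'⟩ := hreach.exists_walk_length_eq_dist
  have hge := hyper_walk_le w'
  omega

lemma class_pair {α : List B} {r : ℕ} (htf : TriangleFree M)
    (hsh : ∀ i, ClassHasShadowAt M α i → ∃ j < r, i = 2*j) (hlen : α.length = 2*r+1)
    {x y : List B} (hx : x ∈ BraidClass M α) (hy : y ∈ BraidClass M α) {j : ℕ} (hj : j < r)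
    (hne : x[2*j+1]? ≠ y[2*j+1]?) :
    ∃ b c : B, x[2*j+1]? = some b ∧ y[2*j+1]? = some c ∧ M b c = 3 := by
  obtain ⟨n, hcn⟩ := exists_chain hx hy
  have hgeo := main_chain htf hsh n x y hx hy hcn
  have hxlen : x.length = 2*r+1 := by rw [mem_class_length hx, hlen]
  obtain ⟨b, hb⟩ : ∃ b, x[2*j+1]? = some b :=
    ⟨_, List.getElem?_eq_getElem (by omega)⟩
  obtain ⟨c, hc, hMcb⟩ := opp_letters hsh (Dd r x y) x hx hgeo rfl j b hb hne
  exact ⟨b, c, hb, hc, (M.symmetric b c).trans hMcb⟩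

open scoped Classical in
lemma phi_ne_iff {α : List B} {r : ℕ} (htf : TriangleFree M)
    (hsh : ∀ i, ClassHasShadowAt M α i → ∃ j < r, i = 2*j) (hlen : α.length = 2*r+1)
    {x y : List B} (hx : x ∈ BraidClass M α) (hy : y ∈ BraidClass M α) {j : ℕ} (hj : j < r) :
    ((if x[2*j+1]? = α[2*j+1]? then false else true)
      ≠ (if y[2*j+1]? = α[2*j+1]? then false else true))
      ↔ x[2*j+1]? ≠ y[2*j+1]? := by
  constructor
  · intro h hxy
    exact h (by rw [hxy])
  · intro hxy
    obtain ⟨b, c, hb, hc, hMbc⟩ := class_pair htf hsh hlen hx hy hj hxy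
    have hα : α ∈ BraidClass M α := Relation.ReflTransGen.refl
    obtain ⟨a, ha⟩ : ∃ a, α[2*j+1]? = some a :=
      ⟨_, List.getElem?_eq_getElem (by omega)⟩
    have hbc : b ≠ c := ne_of_M3 hMbc
    by_cases hab : a = b
    · have ha' : α[2*j+1]? = some b := by rw [ha, hab]
      rw [hb, hc, ha', if_pos rfl,
        if_neg (fun h => hbc ((Option.some.inj h).symm))]
      simp
    · by_cases hac : a = c
      · have ha' : α[2*j+1]? = some c := by rw [ha, hac]
        rw [hb, hc, ha', if_pos rfl,
          if_neg (fun h => hbc (Option.some.inj h))]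
        simp
      · exfalso
        obtain ⟨a1, b1, ha1, hb1, hMab⟩ := class_pair htf hsh hlen hα hx hj
          (by rw [ha, hb]; exact fun h => hab (Option.some.inj h))
        obtain ⟨a2, c2, ha2, hc2, hMac⟩ := class_pair htf hsh hlen hα hy hj
          (by rw [ha, hc]; exact fun h => hac (Option.some.inj h))
        rw [ha] at ha1 ha2
        rw [hb] at hb1
        rw [hc] at hc2
        obtain rfl : a = a1 := Option.some.inj ha1
        obtain rfl : a = a2 := Option.some.inj ha2
        obtain rfl : b = b1 := Option.some.inj hb1
        obtain rfl : c = c2 := Option.some.inj hc2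
        exact htf a b c hab hbc hac hMab hMbc hMac

open scoped Classical in
lemma hamming_eq_Dd {α : List B} {r : ℕ} (htf : TriangleFree M)
    (hsh : ∀ i, ClassHasShadowAt M α i → ∃ j < r, i = 2*j) (hlen : α.length = 2*r+1)
    {x y : List B} (hx : x ∈ BraidClass M α) (hy : y ∈ BraidClass M α) :
    hammingDist (fun k : Fin r => if x[2*(k:ℕ)+1]? = α[2*(k:ℕ)+1]? then false else true)
      (fun k : Fin r => if y[2*(k:ℕ)+1]? = α[2*(k:ℕ)+1]? then false else true)
      = Dd r x y := by
  have hfil : hammingDist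
      (fun k : Fin r => if x[2*(k:ℕ)+1]? = α[2*(k:ℕ)+1]? then false else true)
      (fun k : Fin r => if y[2*(k:ℕ)+1]? = α[2*(k:ℕ)+1]? then false else true)
      = (Finset.univ.filter fun k : Fin r =>
          (if x[2*(k:ℕ)+1]? = α[2*(k:ℕ)+1]? then false else true)
          ≠ (if y[2*(k:ℕ)+1]? = α[2*(k:ℕ)+1]? then false else true)).card := rfl
  rw [hfil]
  unfold Dd
  refine Finset.card_bij' (fun (k : Fin r) _ => (k : ℕ))
    (fun n hn => (⟨n, Finset.mem_range.mp (Finset.mem_filter.mp hn).1⟩ : Fin r))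
    ?_ ?_ ?_ ?_
  · intro k hk
    simp only [Finset.mem_filter, Finset.mem_univ, true_and] at hk
    simp only [Finset.mem_filter, Finset.mem_range]
    exact ⟨k.2, (phi_ne_iff htf hsh hlen hx hy k.2).mp hk⟩
  · intro n hn
    simp only [Finset.mem_filter, Finset.mem_range] at hn
    simp only [Finset.mem_filter, Finset.mem_univ, true_and]
    exact (phi_ne_iff htf hsh hlen hx hy hn.1).mpr hn.2
  · intro k hk
    rfl
  · intro n hn
    rfl

end Aux

open scoped Classical in
/-- the map `Φ_α` recording which even (1-based) positions of a member of
the braid class differ from those of `α` (0-based positions `2k+1`) is an isometric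
embedding of the braid graph of a link of rank `r` into the hypercube `Q_r`; in
particular the braid graph of a link is a partial cube of isometric dimension at
most `r`. -/
theorem statement_11 {B W : Type*} [Group W] {M : CoxeterMatrix B}
    (cs : CoxeterSystem M W) (hsl : SimplyLaced M) (htf : TriangleFree M)
    (α : List B) (r : ℕ) (hlink : IsLink cs α r) :
    IsIsometricEmbedding (braidGraph M α) (hypercube r)
      (fun β (k : Fin r) =>
        if β.1[2 * (k : ℕ) + 1]? = α[2 * (k : ℕ) + 1]? then false else true) ∧
    IsPartialCube (braidGraph M α) ∧ isoDim (braidGraph M α) ≤ r := by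
  obtain ⟨-, hαlen, hsh'⟩ := hlink
  have hsh : ∀ i, ClassHasShadowAt M α i → ∃ j < r, i = 2 * j := fun i h => (hsh' i).mp h
  have hiso : IsIsometricEmbedding (braidGraph M α) (hypercube r)
      (fun β (k : Fin r) =>
        if β.1[2 * (k : ℕ) + 1]? = α[2 * (k : ℕ) + 1]? then false else true) := by
    intro u v
    calc (braidGraph M α).dist u v = Dd r u.1 v.1 := braid_dist htf hsh u.2 v.2
      _ = hammingDist
            (fun k : Fin r => if u.1[2*(k:ℕ)+1]? = α[2*(k:ℕ)+1]? then false else true)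
            (fun k : Fin r => if v.1[2*(k:ℕ)+1]? = α[2*(k:ℕ)+1]? then false else true) :=
          (hamming_eq_Dd htf hsh hαlen u.2 v.2).symm
      _ = (hypercube r).dist
            (fun k : Fin r => if u.1[2*(k:ℕ)+1]? = α[2*(k:ℕ)+1]? then false else true)
            (fun k : Fin r => if v.1[2*(k:ℕ)+1]? = α[2*(k:ℕ)+1]? then false else true) :=
          (hyper_dist _ _).symm
  have hconn : (braidGraph M α).Connected := by
    haveI : Nonempty (BraidClass M α) := ⟨⟨α, Relation.ReflTransGen.refl⟩⟩
    refine SimpleGraph.Connected.mk fun u v => ?_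
    obtain ⟨n, hcn⟩ := exists_chain u.2 v.2
    obtain ⟨w, -⟩ := chain_walk hcn u.2 v.2
    exact ⟨w⟩
  exact ⟨hiso, ⟨hconn, r, _, hiso⟩, Nat.sInf_le ⟨_, hiso⟩⟩


end BraidFormal
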